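/- Completeness of GenGammaPath: for every element of F_γ, written as d·b with d a Dyck word, there exist n ≥ 0 and an array t = (t_0,…,t_n) of nonnegative integers with t_0 > 0 such that d is the output word w_n of GenGammaPath(t). -/

import Mathlib

/-- The two-letter alphabet {a, b}. -/
inductive Letter : Type
  | a : Letter
  | b : Letter
deriving DecidableEq, BEq, Repr

/-- Words over the alphabet {a, b}. -/
abbrev Word := List Letter

/-- δ(w) = |w|_a − |w|_b. -/
def delta (w : Word) : ℤ := (w.count Letter.a : ℤ) - (w.count Letter.b : ℤ)

/-- A Dyck word: δ(w) = 0 and δ(p) ≥ 0 for every prefix p of w. -/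
def IsDyck (w : Word) : Prop := delta w = 0 ∧ ∀ p : Word, p <+: w → 0 ≤ delta p

/-- Membership in D_n: w = d·b with d a Dyck word of length 2n. -/
def InD (n : ℕ) (w : Word) : Prop :=
  ∃ d : Word, IsDyck d ∧ d.length = 2 * n ∧ w = d ++ [Letter.b]

/-- Exchanging the letters a and b. -/
def Letter.flip : Letter → Letter
  | .a => .b
  | .b => .a

/-- The complement w̄ of a word w. -/
def comp (w : Word) : Word := w.map Letter.flip

/-- Sym(w): the complement of the mirror (reversal) of w. -/
def sym (w : Word) : Word := comp w.reverse

/-- A palindrome: a word equal to its mirror. -/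
def Palindrome (w : Word) : Prop := w.reverse = w

/-- w' is a conjugate of w: w = u·v and w' = v·u. -/
def Conj (w w' : Word) : Prop := ∃ u v : Word, w = u ++ v ∧ w' = v ++ u

/-- u is the principal prefix of w: the shortest prefix of w with δ(u) maximal. -/
def IsPrincipalPrefix (u w : Word) : Prop :=
  u <+: w ∧ (∀ p : Word, p <+: w → delta p ≤ delta u) ∧
    (∀ p : Word, p <+: w → delta p = delta u → u.length ≤ p.length)

/-- The graph of the map γ: writing w = u·v·b with u the principal prefix of w,
    γ(w) = v̄·b·ū. -/
def GammaRel (w w' : Word) : Prop :=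
  ∃ u v : Word, IsPrincipalPrefix u w ∧ w = u ++ v ++ [Letter.b] ∧
    w' = comp v ++ [Letter.b] ++ comp u

/-- F_n: the fixed points of γ in D_n. -/
def InF (n : ℕ) (w : Word) : Prop := InD n w ∧ GammaRel w w

/-- F_γ = ⋃_{n ≥ 1} F_n. -/
def InFgamma (w : Word) : Prop := ∃ n : ℕ, 1 ≤ n ∧ InF n w

/-- x^y: concatenation of the word x with itself y times. -/
def wpow (x : Word) : ℕ → Word
  | 0 => []
  | k + 1 => x ++ wpow x k
/-- The words (u_i, w_i) built by GenGammaPath on input array t with degree n.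
    When n is even the construction starts from a^{t₀}·b^{t₀} and the "a-rule"
    is used at even steps; when n is odd it starts from b^{t₀}·a^{t₀} and the
    "a-rule" is used at odd steps (i.e. exactly when i ≡ n (mod 2)). -/
def gen (n : ℕ) (t : ℕ → ℕ) : ℕ → Word × Word
  | 0 =>
    if n % 2 = 0 then
      (List.replicate (t 0 - 1) Letter.a,
       List.replicate (t 0) Letter.a ++ List.replicate (t 0) Letter.b)
    else
      (List.replicate (t 0 - 1) Letter.b,
       List.replicate (t 0) Letter.b ++ List.replicate (t 0) Letter.a)
  | i + 1 =>
    let p := gen n t i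
    if (i + 1) % 2 = n % 2 then
      let u' := sym p.1 ++ wpow ([Letter.a] ++ p.2) (t (i + 1))
      (u', u' ++ [Letter.a] ++ p.2 ++ [Letter.b] ++ sym u')
    else
      let u' := sym p.1 ++ wpow ([Letter.b] ++ p.2) (t (i + 1))
      (u', u' ++ [Letter.b] ++ p.2 ++ [Letter.a] ++ sym u')

/-!
Write the fixed point as `x·b = u·v·b = v̄·b·ū` with `u` its principal prefix. Comparing the
two factorizations gives `u = U·a`, `x = U·a·C·b·Ū`, the conjugacy `C̄·a·U = U·a·C`, and `C̄`
is again a Dyck word. If `C` is empty then `U = a^k` and `x = a^(k+1)·b^(k+1)` is the output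
of degree 0. Otherwise, with `y = C̄`, the conjugacy forces `U = U₀·(a·ȳ)^k` and
`y = U₀·a·R = R̄·b·Ū₀`, so `y·b` is a shorter fixed point with principal prefix `U₀·a`. By
induction `y` is an output whose last `u`-word is `U₀`; raising the degree by one complements
all earlier words, and the new last step with `t = k` produces `x`. Outputs satisfy
`Sym w = w`, which makes `U₀` and `U` palindromes, as that last step requires.
-/

open Letter

namespace Letter

@[simp] lemma flip_a : a.flip = b := rfl

@[simp] lemma flip_b : b.flip = a := rfl

@[simp] lemma flip_flip (c : Letter) : c.flip.flip = c := by cases c <;> rfl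

end Letter

section Words

variable (u v w : Word)

@[simp] lemma comp_nil : comp [] = [] := rfl

@[simp] lemma comp_cons (c : Letter) : comp (c :: w) = c.flip :: comp w := rfl

@[simp] lemma comp_append : comp (u ++ v) = comp u ++ comp v := List.map_append

@[simp] lemma comp_comp : comp (comp w) = w := by simp [comp, Function.comp_def]

@[simp] lemma comp_eq_nil_iff : comp w = [] ↔ w = [] := List.map_eq_nil_iff

@[simp] lemma length_comp : (comp w).length = w.length := List.length_map _

@[simp] lemma comp_replicate (k : ℕ) (c : Letter) :
    comp (List.replicate k c) = List.replicate k c.flip := List.map_replicate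

lemma comp_injective : Function.Injective comp := Function.LeftInverse.injective comp_comp

lemma reverse_comp : (comp w).reverse = sym w := (List.map_reverse ..).symm

lemma comp_ne_self {w : Word} (hw : w ≠ []) : comp w ≠ w := by
  obtain ⟨c, w, rfl⟩ := List.exists_cons_of_ne_nil hw
  cases c <;> simp

@[simp] lemma sym_append : sym (u ++ v) = sym v ++ sym u := by simp [sym]

@[simp] lemma sym_cons (c : Letter) : sym (c :: w) = sym w ++ [c.flip] := by
  simp [sym]

@[simp] lemma sym_replicate (k : ℕ) (c : Letter) :
    sym (List.replicate k c) = List.replicate k c.flip := by simp [sym]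

@[simp] lemma sym_sym : sym (sym w) = w := by
  simp [sym, comp, ← List.map_reverse, Function.comp_def]

lemma sym_comp : sym (comp w) = w.reverse := by simp [← reverse_comp]

@[simp] lemma comp_sym : comp (sym w) = sym (comp w) := by rw [sym_comp, sym, comp_comp]

lemma sym_eq_comp_of_reverse_eq {w : Word} (h : w.reverse = w) : sym w = comp w := by
  rw [sym, h]

@[simp] lemma delta_nil : delta [] = 0 := rfl

@[simp] lemma delta_append : delta (u ++ v) = delta u + delta v := by
  simp only [delta, List.count_append]; push_cast; ring

@[simp] lemma delta_cons_a : delta (a :: w) = delta w + 1 := by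
  simp +decide only [delta, List.count_cons, ↓reduceIte, Nat.cast_add, Nat.cast_one, add_zero]
  ring

@[simp] lemma delta_cons_b : delta (b :: w) = delta w - 1 := by
  simp +decide only [delta, List.count_cons, ↓reduceIte, Nat.cast_add, Nat.cast_one, add_zero]
  ring

@[simp] lemma delta_comp : delta (comp w) = -delta w := by
  induction w with
  | nil => rfl
  | cons c w ih =>
    cases c <;> simp only [comp_cons, flip_a, flip_b, delta_cons_a, delta_cons_b, ih] <;> ring

lemma wpow_succ' (x : Word) (k : ℕ) : wpow x (k + 1) = wpow x k ++ x := by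
  induction k with
  | zero => simp [wpow]
  | succ k ih =>
    show x ++ wpow x (k + 1) = wpow x (k + 1) ++ x
    nth_rw 1 [ih]
    rw [← List.append_assoc]; rfl

@[simp] lemma comp_wpow (x : Word) (k : ℕ) : comp (wpow x k) = wpow (comp x) k := by
  induction k with
  | zero => rfl
  | succ k ih => simp [wpow, ih]

lemma reverse_wpow (x : Word) (k : ℕ) : (wpow x k).reverse = wpow x.reverse k := by
  induction k with
  | zero => rfl
  | succ k ih => rw [wpow, List.reverse_append, ih, wpow_succ']

lemma wpow_append_comm {X Y U : Word} (h : X ++ U = U ++ Y) (k : ℕ) :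
    wpow X k ++ U = U ++ wpow Y k := by
  induction k with
  | zero => simp [wpow]
  | succ k ih => rw [wpow, List.append_assoc, ih, ← List.append_assoc, h, wpow,
      List.append_assoc]

end Words

lemma List.prefix_append_or {α : Type*} {p l₁ l₂ : List α} (h : p <+: l₁ ++ l₂) :
    p <+: l₁ ∨ ∃ q, q <+: l₂ ∧ p = l₁ ++ q := by
  rcases List.prefix_or_prefix_of_prefix h (List.prefix_append l₁ l₂) with hp | ⟨q, rfl⟩
  · exact .inl hp
  · exact .inr ⟨q, (List.prefix_append_right_inj l₁).mp h, rfl⟩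

lemma List.eq_replicate_of_cons_eq_concat {α : Type*} {c : α} :
    ∀ {l : List α}, c :: l = l ++ [c] → l = List.replicate l.length c
  | [], _ => rfl
  | d :: l, h => by
    obtain ⟨rfl, h⟩ := List.cons.inj h
    simpa [List.replicate_succ] using List.eq_replicate_of_cons_eq_concat h

lemma comp_prefix_comp {p w : Word} (h : p <+: w) : comp p <+: comp w := h.map _

namespace IsDyck

variable {x : Word} (hx : IsDyck x)
include hx

lemma delta_nonpos_of_suffix {s : Word} (h : s <:+ x) : delta s ≤ 0 := by
  obtain ⟨p, rfl⟩ := h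
  have := hx.2 p (List.prefix_append p s)
  have := hx.1
  simp only [delta_append] at *
  linarith

lemma exists_eq_a_cons (hne : x ≠ []) : ∃ y, x = a :: y := by
  obtain ⟨c, y, rfl⟩ := List.exists_cons_of_ne_nil hne
  cases c
  · exact ⟨y, rfl⟩
  · have := hx.2 [b] (by simp)
    simp at this

end IsDyck

lemma IsPrincipalPrefix.exists_eq_append_a {u w : Word} (hu : IsPrincipalPrefix u w)
    (hpos : 0 < delta u) : ∃ U, u = U ++ [a] := by
  rcases List.eq_nil_or_concat u with rfl | ⟨U, c, rfl⟩
  · simp at hpos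
  rw [List.concat_eq_append] at *
  cases c
  · exact ⟨U, rfl⟩
  · have := hu.2.1 U ((List.prefix_append U [b]).trans hu.1)
    simp at this

lemma isPrincipalPrefix_of_eq {y U R : Word} (hy : IsDyck y) (h₁ : y = U ++ [a] ++ R)
    (h₂ : comp y = R ++ [a] ++ U) : IsPrincipalPrefix (U ++ [a]) (y ++ [b]) := by
  replace h₂ : y = comp R ++ [b] ++ comp U := by simpa using congrArg comp h₂
  have hU : ∀ p, p <+: U → delta p ≤ delta U := by
    rintro p ⟨q, rfl⟩
    have : delta (comp q) ≤ 0 :=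
      hy.delta_nonpos_of_suffix ⟨comp R ++ [b] ++ comp p, by simp [h₂]⟩
    simp only [delta_comp, delta_append] at this ⊢
    linarith
  -- the complement of a prefix of `R` is a prefix of `y`
  have hRb : ∀ q, q <+: R ++ [b] → delta q ≤ 0 := by
    intro q hq
    rcases List.prefix_concat_iff.mp hq with rfl | ⟨s, rfl⟩
    · have := hy.2 (comp R) ⟨[b] ++ comp U, by simp [h₂]⟩
      simp only [delta_comp, delta_append, delta_cons_b, delta_nil] at this ⊢
      linarith
    · have := hy.2 (comp q) ⟨comp s ++ [b] ++ comp U, by simp [h₂]⟩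
      simpa using this
  have hyb : y ++ [b] = U ++ [a] ++ (R ++ [b]) := by simp [h₁]
  have hpre : U ++ [a] <+: y ++ [b] := ⟨R ++ [b], hyb.symm⟩
  refine ⟨hpre, fun p hp => ?_, fun p hp hδ => ?_⟩
  · rw [hyb] at hp
    rcases List.prefix_append_or hp with hp | ⟨q, hq, rfl⟩
    · rcases List.prefix_concat_iff.mp hp with rfl | hp
      · rfl
      · have := hU p hp
        simp only [delta_append, delta_cons_a, delta_nil]
        linarith
    · have := hRb q hq
      simp only [delta_append]
      linarith
  · by_contra hlt
    have hpU : p <+: U ++ [a] :=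
      List.prefix_of_prefix_length_le hp hpre (by omega)
    rcases List.prefix_concat_iff.mp hpU with rfl | hpU
    · exact hlt le_rfl
    · have := hU p hpU
      simp only [delta_append, delta_cons_a, delta_nil] at hδ
      linarith

section FixedPoint

variable {x u v : Word}

lemma length_le_of_gamma_fixed (hx : IsDyck x) (h₁ : x ++ [b] = u ++ v ++ [b])
    (h₂ : x ++ [b] = comp v ++ [b] ++ comp u) : u.length ≤ v.length := by
  have hx' : x = u ++ v := List.append_cancel_right h₁
  -- Otherwise `comp u = r ++ v ++ [b]` with `δ r = 1`, and `comp r` is a prefix of `x`.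
  by_contra! hlt
  obtain ⟨r, hr⟩ : v ++ [b] <:+ comp u :=
    List.suffix_of_suffix_length_le ⟨u, by rw [h₁, List.append_assoc]⟩
      ⟨comp v ++ [b], h₂.symm⟩
      (by simp only [List.length_append, List.length_singleton, length_comp]; omega)
  have hu : u = comp r ++ comp v ++ [a] := by simpa using (congrArg comp hr).symm
  have hδ : delta r = 1 := by
    have h0 := hx.1
    have := congrArg delta hr
    rw [hx'] at h0
    simp only [delta_append, delta_cons_b, delta_nil, delta_comp] at h0 this
    linarith
  have := hx.2 (comp r) ⟨comp v ++ [a] ++ v, by rw [hx', hu]; simp⟩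
  simp only [delta_comp] at this
  linarith

lemma exists_decomp_of_gamma_fixed (hx : IsDyck x) (hne : x ≠ [])
    (hu : IsPrincipalPrefix u (x ++ [b])) (h₁ : x ++ [b] = u ++ v ++ [b])
    (h₂ : x ++ [b] = comp v ++ [b] ++ comp u) :
    ∃ U C, u = U ++ [a] ∧ x = U ++ [a] ++ C ++ [b] ++ comp U ∧
      comp C ++ [a] ++ U = U ++ [a] ++ C ∧ IsDyck (comp C) := by
  have hx' : x = u ++ v := List.append_cancel_right h₁
  have hpos : 0 < delta u := by
    obtain ⟨y, rfl⟩ := hx.exists_eq_a_cons hne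
    have := hu.2.1 [a] (by simp)
    simp only [delta_cons_a, delta_nil] at this
    linarith
  obtain ⟨U, rfl⟩ := hu.exists_eq_append_a hpos
  obtain ⟨C, hC⟩ : U ++ [a] <+: comp v :=
    List.prefix_of_prefix_length_le hu.1 ⟨[b] ++ comp (U ++ [a]), by simp [h₂]⟩
      (by simpa using length_le_of_gamma_fixed hx h₁ h₂)
  have hv : v = C ++ [b] ++ comp U := by
    have : U ++ [a] ++ (v ++ [b]) = U ++ [a] ++ (C ++ [b] ++ comp U ++ [b]) := by
      rw [← List.append_assoc, ← h₁, h₂, ← hC]; simp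
    exact List.append_cancel_right (List.append_cancel_left this)
  have hδ : delta C = 0 := by
    have := hx.1
    rw [hx', hv] at this
    simp only [delta_append, delta_cons_a, delta_cons_b, delta_nil, delta_comp] at this
    linarith
  refine ⟨U, C, rfl, by rw [hx', hv]; simp, by rw [hC, hv]; simp, by simp [hδ], ?_⟩
  intro p hp
  have hp' : comp p <+: C := by simpa using comp_prefix_comp hp
  have := hu.2.1 (U ++ [a] ++ comp p)
    (by rw [h₁, hv]; simpa using hp'.trans (List.prefix_append _ _))
  simp only [delta_append, delta_cons_a, delta_nil, delta_comp] at this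
  linarith

end FixedPoint

lemma exists_eq_append_wpow_of_append_eq {X Y : Word} (hX : X ≠ []) {U : Word}
    (h : X ++ U = U ++ Y) :
    ∃ U₀ k, U₀.length < X.length ∧ X ++ U₀ = U₀ ++ Y ∧ U = U₀ ++ wpow Y k := by
  induction hn : U.length using Nat.strong_induction_on generalizing U with
  | _ n ih =>
  by_cases hlt : U.length < X.length
  · exact ⟨U, 0, hlt, h, by simp [wpow]⟩
  obtain ⟨U', rfl⟩ : X <+: U :=
    List.prefix_of_prefix_length_le ⟨U, rfl⟩ ⟨Y, h.symm⟩ (by omega)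
  have h' : X ++ U' = U' ++ Y := by simpa using h
  have hlen : U'.length < n := by
    have := List.length_pos_of_ne_nil hX
    simp only [List.length_append] at hn
    omega
  obtain ⟨U₀, k, hU₀len, hU₀, rfl⟩ := ih _ hlen h' rfl
  refine ⟨U₀, k + 1, hU₀len, hU₀, ?_⟩
  rw [← List.append_assoc, hU₀, List.append_assoc]
  rfl

lemma exists_split_of_conj_comp {y U₀ : Word} (hy : y ≠ [])
    (h : y ++ [a] ++ U₀ = U₀ ++ [a] ++ comp y) (hlen : U₀.length ≤ y.length) :
    ∃ R, y = U₀ ++ [a] ++ R ∧ comp y = R ++ [a] ++ U₀ := by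
  obtain ⟨S, rfl⟩ : U₀ <+: y :=
    List.prefix_of_prefix_length_le ⟨[a] ++ comp y, by rw [h, List.append_assoc]⟩
      (List.prefix_append_of_prefix (List.prefix_append y [a])) hlen
  have hS : S ++ [a] ++ U₀ = [a] ++ comp U₀ ++ comp S := by simpa using h
  rcases S with _ | ⟨c, R⟩
  · exact absurd (by simpa using hS.symm) (comp_ne_self (by simpa using hy))
  · obtain ⟨rfl, hR⟩ : c = a ∧ R ++ [a] ++ U₀ = comp U₀ ++ comp (c :: R) := by
      simpa using hS
    exact ⟨R, by simp, by rw [hR, comp_append]⟩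

section Gen

variable {n : ℕ} {t : ℕ → ℕ}

lemma gen_succ_of_mod_two_eq {i : ℕ} {u w : Word} (h : (i + 1) % 2 = n % 2)
    (hi : gen n t i = (u, w)) :
    gen n t (i + 1) = (sym u ++ wpow ([a] ++ w) (t (i + 1)),
      sym u ++ wpow ([a] ++ w) (t (i + 1)) ++ [a] ++ w ++ [b] ++
        sym (sym u ++ wpow ([a] ++ w) (t (i + 1)))) := by
  simp only [gen, hi, if_pos h]

lemma sym_gen_snd (i : ℕ) : sym (gen n t i).2 = (gen n t i).2 := by
  induction i with
  | zero => unfold gen; split_ifs <;> simp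
  | succ i ih => unfold gen; split_ifs <;> simp [ih]

lemma gen_eq_map_comp {n' : ℕ} {t' : ℕ → ℕ} (hn : n % 2 ≠ n' % 2) {i : ℕ}
    (ht : ∀ j ≤ i, t j = t' j) : gen n t i = Prod.map comp comp (gen n' t' i) := by
  induction i with
  | zero =>
    have h0 := ht 0 le_rfl
    unfold gen
    rcases Nat.mod_two_eq_zero_or_one n with h | h <;>
      rcases Nat.mod_two_eq_zero_or_one n' with h' | h' <;> simp_all
  | succ i ih =>
    rw [gen, gen, ih (fun j hj => ht j (by omega)), ht (i + 1) le_rfl]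
    by_cases h : (i + 1) % 2 = n % 2
    · rw [if_pos h, if_neg (by omega)]
      simp
    · rw [if_neg h, if_pos (by omega)]
      simp

end Gen

lemma gen_extend {n : ℕ} {t : ℕ → ℕ} {y U₀ R U : Word} (hgen : gen n t n = (U₀, y))
    (h₁ : y = U₀ ++ [a] ++ R) (h₂ : comp y = R ++ [a] ++ U₀) (k : ℕ)
    (hU : U = U₀ ++ wpow ([a] ++ comp y) k) :
    gen (n + 1) (Function.update t (n + 1) k) (n + 1) =
      (U, U ++ [a] ++ comp y ++ [b] ++ comp U) := by
  have hsym : sym y = y := by simpa [hgen] using sym_gen_snd (n := n) (t := t) n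
  have hU₀ : U₀.reverse = U₀ := by
    have h₂' : y = comp R ++ [b] ++ comp U₀ := by simpa using congrArg comp h₂
    have : sym R ++ [b] ++ sym U₀ = comp R ++ [b] ++ comp U₀ := by
      rw [← h₂', ← hsym, h₁]; simp
    exact comp_injective (List.append_inj_right' this (by simp))
  have hconj : y ++ [a] ++ U₀ = U₀ ++ [a] ++ comp y := by
    rw [h₂]; nth_rw 1 [h₁]; simp
  have hUrev : U.reverse = U := by
    have hrev : ([a] ++ comp y).reverse = y ++ [a] := by simp [reverse_comp, hsym]
    rw [hU, List.reverse_append, reverse_wpow, hU₀, hrev]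
    exact wpow_append_comm (by simpa using hconj) k
  have hprev : gen (n + 1) (Function.update t (n + 1) k) n = (comp U₀, comp y) := by
    rw [gen_eq_map_comp (n' := n) (t' := t) (by omega)
      (fun j hj => Function.update_of_ne (by omega) _ _), hgen]
    rfl
  rw [gen_succ_of_mod_two_eq rfl hprev, Function.update_self, sym_comp, hU₀, ← hU,
    sym_eq_comp_of_reverse_eq hUrev]

theorem exists_gen_of_gamma_fixed {x u v : Word} (hx : IsDyck x) (hne : x ≠ [])
    (hu : IsPrincipalPrefix u (x ++ [b])) (h₁ : x ++ [b] = u ++ v ++ [b])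
    (h₂ : x ++ [b] = comp v ++ [b] ++ comp u) :
    ∃ n t, 0 < t 0 ∧ gen n t n = (u.dropLast, x) := by
  induction hN : x.length using Nat.strong_induction_on generalizing x u v with
  | _ N ih =>
  obtain ⟨U, C, rfl, rfl, hUC, hC⟩ := exists_decomp_of_gamma_fixed hx hne hu h₁ h₂
  rw [List.dropLast_concat]
  by_cases hCnil : C = []
  · subst hCnil
    obtain ⟨L, rfl⟩ : ∃ L, U = List.replicate L a :=
      ⟨_, List.eq_replicate_of_cons_eq_concat (by simpa using hUC)⟩
    refine ⟨0, fun _ => L + 1, Nat.succ_pos L, ?_⟩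
    simp [gen, List.replicate_succ', ← List.replicate_succ]
  set y := comp C with hy
  have hyne : y ≠ [] := by simpa [hy]
  obtain ⟨U₀, k, hlen, hU₀, rfl⟩ := exists_eq_append_wpow_of_append_eq
    (X := y ++ [a]) (Y := [a] ++ comp y) (by simp) (by simpa [hy] using hUC)
  obtain ⟨R, hR₁, hR₂⟩ := exists_split_of_conj_comp hyne (by simpa using hU₀)
    (by simp only [List.length_append, List.length_singleton] at hlen; omega)
  have hyN : y.length < N := by
    simp only [← hN, hy, List.length_append, List.length_singleton, length_comp]
    omega
  have hy₂ : y ++ [b] = comp R ++ [b] ++ comp (U₀ ++ [a]) := by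
    rw [← comp_comp y, hR₂]; simp
  obtain ⟨n, t, ht, hgen⟩ :=
    ih _ hyN hC hyne (isPrincipalPrefix_of_eq hC hR₁ hR₂) (by rw [hR₁]) hy₂ rfl
  rw [List.dropLast_concat] at hgen
  refine ⟨n + 1, Function.update t (n + 1) k, by simpa [Function.update_of_ne] using ht, ?_⟩
  rw [gen_extend hgen hR₁ hR₂ k rfl, hy, comp_comp]

theorem genGammaPath_complete_general (w d : Word) (hw : InFgamma w)
    (hwd : w = d ++ [Letter.b]) :
    ∃ (n : ℕ) (t : ℕ → ℕ), 0 < t 0 ∧ d = (gen n t n).2 := by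
  obtain ⟨m, hm, ⟨d', hd', hlen, rfl⟩, u, v, hu, h₁, h₂⟩ := hw
  obtain rfl : d' = d := List.append_cancel_right hwd
  have hne : d' ≠ [] := by
    rintro rfl
    simp only [List.length_nil] at hlen
    omega
  obtain ⟨n, t, ht, hgen⟩ := exists_gen_of_gamma_fixed hd' hne hu h₁ h₂
  exact ⟨n, t, ht, by rw [hgen]⟩

/-- Completeness of GenGammaPath: every element of F_γ, written as d·b with
    d a Dyck word, is obtained as the output w_n of GenGammaPath(t) for some
    degree n and some array t of nonnegative integers with t₀ > 0. -/
theorem genGammaPath_complete (w d : Word) (hw : InFgamma w)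
    (hd : IsDyck d) (hwd : w = d ++ [Letter.b]) :
    ∃ (n : ℕ) (t : ℕ → ℕ), 0 < t 0 ∧ d = (gen n t n).2 :=
  genGammaPath_complete_general w d hw hwd
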